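/- Monotonicity of valuations under inclusion of strategies: if σ_a ⊆ σ_b are both reasonable player-0 strategies, then V_{σ_a}(s) ≼ V_{σ_b}(s) for all nodes s. -/

import Mathlib

open scoped Classical

/-- The order `≺` on integer color profiles `ℤ^d`: compare at the largest index where
they differ; at an even index the larger entry wins, at an odd index the smaller one. -/
def FinLt {d : ℕ} (p q : Fin d → ℤ) : Prop :=
  ∃ k : Fin d, p k ≠ q k ∧ (∀ j, k < j → p j = q j) ∧
    ((Even (k : ℕ) ∧ p k < q k) ∨ (Odd (k : ℕ) ∧ q k < p k))

/-- Reflexive closure `≼` of `FinLt`. -/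
def FinLe {d : ℕ} (p q : Fin d → ℤ) : Prop := p = q ∨ FinLt p q

/-- Color profiles: `ℤ^d` together with `-∞` (`bot`) and `∞` (`top`). -/
inductive Prof (d : ℕ) where
  | bot : Prof d
  | fin : (Fin d → ℤ) → Prof d
  | top : Prof d

/-- The order `≺` on color profiles: `-∞` is the bottom element, `∞` the top element,
finite profiles are compared by `FinLt`. -/
def Prof.Lt {d : ℕ} : Prof d → Prof d → Prop
  | .bot, .bot => False
  | .bot, .fin _ => True
  | .bot, .top => True
  | .fin _, .bot => False
  | .fin p, .fin q => FinLt p q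
  | .fin _, .top => True
  | .top, _ => False

/-- Reflexive closure `≼` of `Prof.Lt`. -/
def Prof.Le {d : ℕ} (p q : Prof d) : Prop := p = q ∨ Prof.Lt p q

/-- Adding a vector in `ℤ^d` to a profile; `±∞` are absorbing. -/
def Prof.add {d : ℕ} : Prof d → (Fin d → ℤ) → Prof d
  | .bot, _ => .bot
  | .fin p, q => .fin (p + q)
  | .top, _ => .top

/-- A parity game arena: a finite directed graph, each node owned by player 0 or 1 and
colored by a color in `{0,…,d-1}`; every node has at least one successor. -/
structure PGA (V : Type) (d : ℕ) where
  edge : V → V → Prop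
  owner : V → Fin 2
  color : V → Fin d
  succ : ∀ v, ∃ w, edge v w

variable {V : Type} {d : ℕ}

/-- The profile `℘(s)` of a single vertex: the unit vector at its color. -/
def unitProf (A : PGA V d) (s : V) : Fin d → ℤ := fun k => if A.color s = k then 1 else 0

/-- The color profile `℘(π)` of a finite sequence of vertices: how often each color occurs. -/
def listProf (A : PGA V d) (L : List V) : Fin d → ℤ := fun k => ((L.map A.color).count k : ℤ)

/-- `℘(s) + p` for a vertex `s` and a profile `p`. -/
def addV (A : PGA V d) (s : V) (p : Prof d) : Prof d := p.add (unitProf A s)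

/-- Edges of the escape arena `A_⊥` over `Option V`, where `none` is the sink `⊥`:
all edges of `A`, plus an edge from every player-0 node to `⊥`; `⊥` has no outgoing edges. -/
def EdgeB (A : PGA V d) : Option V → Option V → Prop
  | some u, some v => A.edge u v
  | some u, none => A.owner u = 0
  | none, _ => False

/-- A (memoryless, possibly non-deterministic) strategy of player 0 in `A_⊥`:
a set of player-0 edges giving every player-0 node at least one successor. -/
def Strategy0 (A : PGA V d) (σ : V → Option V → Prop) : Prop :=
  (∀ s t, σ s t → A.owner s = 0 ∧ EdgeB A (some s) t) ∧
  (∀ s, A.owner s = 0 → ∃ t, σ s t)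

/-- A (memoryless, possibly non-deterministic) strategy of player 1 (who never moves to `⊥`). -/
def Strategy1 (A : PGA V d) (τ : V → V → Prop) : Prop :=
  (∀ s t, τ s t → A.owner s = 1 ∧ A.edge s t) ∧
  (∀ s, A.owner s = 1 → ∃ t, τ s t)

/-- A strategy is deterministic if it picks at most one successor per node. -/
def Deterministic (σ : V → Option V → Prop) : Prop :=
  ∀ s t t', σ s t → σ s t' → t = t'

/-- Edges of `A_⊥` restricted to a player-0 strategy `σ` that stay inside `V`
(cycles of `A_⊥|σ` never pass through `⊥`). -/
def EdgeSig (A : PGA V d) (σ : V → Option V → Prop) (u v : V) : Prop :=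
  (A.owner u = 1 ∧ A.edge u v) ∨ σ u (some v)

/-- A (nonempty) cycle in `A_⊥|σ`: consecutive edges plus the wrap-around edge. -/
def CycleIn (A : PGA V d) (σ : V → Option V → Prop) (L : List V) : Prop :=
  L ≠ [] ∧ List.Chain' (EdgeSig A σ) L ∧
  ∀ a b, L.head? = some a → L.getLast? = some b → EdgeSig A σ b a

/-- A player-0 strategy is reasonable if `A_⊥|σ` has no 1-dominated cycle,
i.e. on every cycle the dominating (maximal) color is even. -/
def Reasonable (A : PGA V d) (σ : V → Option V → Prop) : Prop :=
  ∀ L, CycleIn A σ L → ∀ v ∈ L, (∀ w ∈ L, A.color w ≤ A.color v) → Even ((A.color v : ℕ))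

/-- One step of a play in `A_⊥` with player 0 using `σ` and player 1 using `τ`;
the sink `⊥` is absorbing. -/
def PlayStep (A : PGA V d) (σ : V → Option V → Prop) (τ : V → V → Prop) :
    Option V → Option V → Prop
  | none, y => y = none
  | some u, y => (A.owner u = 0 ∧ σ u y) ∨ (A.owner u = 1 ∧ ∃ v, y = some v ∧ τ u v)

/-- A play from `s` in `A_⊥|σ,τ` (modelled with absorbing sink). -/
def IsPlay (A : PGA V d) (σ : V → Option V → Prop) (τ : V → V → Prop)
    (s : V) (π : ℕ → Option V) : Prop :=
  π 0 = some s ∧ ∀ n, PlayStep A σ τ (π n) (π (n + 1))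

/-- One step of a play in `A_⊥` with player 0 using `σ`, player 1 unconstrained. -/
def PlayStepB (A : PGA V d) (σ : V → Option V → Prop) : Option V → Option V → Prop
  | none, y => y = none
  | some u, y => (A.owner u = 0 ∧ σ u y) ∨ (A.owner u = 1 ∧ ∃ v, y = some v ∧ A.edge u v)

/-- A play from `s` in `A_⊥|σ` against an arbitrary player 1. -/
def IsPlayB (A : PGA V d) (σ : V → Option V → Prop) (s : V) (π : ℕ → Option V) : Prop :=
  π 0 = some s ∧ ∀ n, PlayStepB A σ (π n) (π (n + 1))

/-- Color `k` occurs at position `n` of the play `π`. -/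
def ColorAt (A : PGA V d) (π : ℕ → Option V) (n : ℕ) (k : Fin d) : Prop :=
  ∃ v, π n = some v ∧ A.color v = k

/-- An infinite play of `A_⊥` (never reaching `⊥`) is won by player 0 iff the maximal color
occurring infinitely often is even. -/
def Won0B (A : PGA V d) (π : ℕ → Option V) : Prop :=
  ∃ k : Fin d, Even ((k : ℕ)) ∧ (∀ N, ∃ n ≥ N, ColorAt A π n k) ∧
    ∀ j : Fin d, k < j → ∃ N, ∀ n ≥ N, ¬ ColorAt A π n j

/-- The value `℘(π)` of a play in `A_⊥`: for a finite play (reaching `⊥`), the color profile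
of its vertices; for an infinite play, `∞` if player 0 wins it and `-∞` otherwise. -/
noncomputable def PlayValue (A : PGA V d) (π : ℕ → Option V) : Prof d :=
  if h : ∃ n, π n = none then
    .fin (fun k =>
      (((Finset.range (Nat.find h)).filter (fun n => ColorAt A π n k)).card : ℤ))
  else if Won0B A π then .top else .bot

/-- `p` is the `≺`-maximum of the set `S` of profiles. -/
def IsMaxOf {d : ℕ} (S : Set (Prof d)) (p : Prof d) : Prop := p ∈ S ∧ ∀ q ∈ S, Prof.Le q p

/-- `p` is the `≺`-minimum of the set `S` of profiles. -/
def IsMinOf {d : ℕ} (S : Set (Prof d)) (p : Prof d) : Prop := p ∈ S ∧ ∀ q ∈ S, Prof.Le p q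

/-- `W` is the valuation `𝒱_σ` of the player-0 strategy `σ`: `W(⊥) = ō`, and `W(s)` is the
`≺`-minimal value player 1 can guarantee (by a memoryless strategy) in any play from `s`
in `A_⊥|σ`. -/
def IsValuation (A : PGA V d) (σ : V → Option V → Prop) (W : Option V → Prof d) : Prop :=
  W none = .fin 0 ∧
  ∀ s : V, IsMinOf
    { p | ∃ τ, Strategy1 A τ ∧
        IsMaxOf { q | ∃ π, IsPlay A σ τ s π ∧ q = PlayValue A π } p }
    (W (some s))

/-- `(s,t)` is an improvement of `σ` w.r.t. the valuation `W`: a player-0 edge with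
`W(s) ≼ ℘(s) + W(t)`.  `I_σ` is the set (strategy) of all improvements. -/
def Improvement (A : PGA V d) (W : Option V → Prof d) (s : V) (t : Option V) : Prop :=
  A.owner s = 0 ∧ EdgeB A (some s) t ∧ Prof.Le (W (some s)) (addV A s (W t))

/-- `(s,t)` is a strict improvement of `σ` w.r.t. `W`: a player-0 edge with
`W(s) ≺ ℘(s) + W(t)`. -/
def StrictImp (A : PGA V d) (W : Option V → Prof d) (s : V) (t : Option V) : Prop :=
  A.owner s = 0 ∧ EdgeB A (some s) t ∧ Prof.Lt (W (some s)) (addV A s (W t))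

/-- A memoryless strategy of player 0 in the original parity game arena `A`. -/
def Strat0A (A : PGA V d) (σ : V → V → Prop) : Prop :=
  (∀ s t, σ s t → A.owner s = 0 ∧ A.edge s t) ∧ (∀ s, A.owner s = 0 → ∃ t, σ s t)

/-- A play in `A` from `s` where player 0 follows `σ` and player 1 is unconstrained. -/
def PlayA (A : PGA V d) (σ : V → V → Prop) (s : V) (π : ℕ → V) : Prop :=
  π 0 = s ∧ ∀ n, (A.owner (π n) = 0 → σ (π n) (π (n + 1))) ∧
    (A.owner (π n) = 1 → A.edge (π n) (π (n + 1)))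

/-- Parity winning condition in `A` for player 0: the maximal color seen infinitely often is even. -/
def Won0A (A : PGA V d) (π : ℕ → V) : Prop :=
  ∃ k : Fin d, Even ((k : ℕ)) ∧ (∀ N, ∃ n ≥ N, A.color (π n) = k) ∧
    ∀ j : Fin d, k < j → ∃ N, ∀ n ≥ N, A.color (π n) ≠ j

/-- Player 0 wins the node `s` of the parity game arena `A` (with a memoryless strategy). -/
def Win0 (A : PGA V d) (s : V) : Prop :=
  ∃ σ, Strat0A A σ ∧ ∀ π, PlayA A σ s π → Won0A A π

/-- An acyclic path of `A_⊥` terminating in `⊥`: pairwise distinct vertices, consecutive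
edges of `A`, and the last vertex owned by player 0 (so it has the edge to `⊥`). -/
def AcyclicToBot (A : PGA V d) (L : List V) : Prop :=
  L.Nodup ∧ List.Chain' A.edge L ∧ ∀ b, L.getLast? = some b → A.owner b = 0

/-! Fix a player-1 strategy `τ` attaining `𝒱_{σ_b}(s)`. Every play of `A_⊥|σ_a,τ` is a play of
`A_⊥|σ_b,τ`, so the best value `p` that `σ_a` achieves against `τ` satisfies `p ≼ 𝒱_{σ_b}(s)`, while
`𝒱_{σ_a}(s) ≼ p` by minimality. What has to be shown is that this best value exists. If some play
is infinite, player 0 wins it (value `∞`): a vertex of maximal color among those visited infinitely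
often closes a cycle of `A_⊥|σ_a` through such vertices only, and `σ_a` is reasonable. Otherwise,
by pigeonhole every play reaches `⊥` within `|V|` steps, so there are finitely many values, and `≺`
is linear on them: on `ℤ^d` it is the colexicographic order after negating the odd coordinates. -/

open Filter

def signedColex (p : Fin d → ℤ) : Colex (Fin d → ℤ) :=
  toColex fun k => if Even (k : ℕ) then p k else -p k

theorem signedColex_apply_eq_iff {p q : Fin d → ℤ} {k : Fin d} :
    signedColex p k = signedColex q k ↔ p k = q k := by
  simp only [signedColex, Pi.toColex_apply]
  split_ifs <;> simp

theorem signedColex_injective : Function.Injective (signedColex (d := d)) :=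
  fun _ _ h => funext fun k => signedColex_apply_eq_iff.mp (congrFun h k)

theorem finLt_iff_signedColex_lt {p q : Fin d → ℤ} :
    FinLt p q ↔ signedColex p < signedColex q := by
  show _ ↔ ∃ k, (∀ j, k < j → _ = _) ∧ _ < _
  simp only [signedColex_apply_eq_iff]
  refine exists_congr fun k => ?_
  simp only [signedColex, Pi.toColex_apply]
  rcases Nat.even_or_odd (k : ℕ) with hk | hk
  · simp only [hk, Nat.not_odd_iff_even.mpr hk, if_true, true_and, false_and, or_false]
    exact ⟨fun h => ⟨h.2.1, h.2.2⟩, fun h => ⟨h.2.ne, h.1, h.2⟩⟩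
  · simp only [hk, Nat.not_even_iff_odd.mpr hk, if_false, true_and, false_and, false_or,
      neg_lt_neg_iff]
    exact ⟨fun h => ⟨h.2.1, h.2.2⟩, fun h => ⟨h.2.ne', h.1, h.2⟩⟩

theorem FinLt.trans {p q r : Fin d → ℤ} (hpq : FinLt p q) (hqr : FinLt q r) : FinLt p r :=
  finLt_iff_signedColex_lt.mpr
    ((finLt_iff_signedColex_lt.mp hpq).trans (finLt_iff_signedColex_lt.mp hqr))

theorem Set.Finite.exists_finLe_max {T : Set (Fin d → ℤ)} (hT : T.Finite) (hne : T.Nonempty) :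
    ∃ p ∈ T, ∀ q ∈ T, FinLe q p := by
  obtain ⟨p, hp, hmax⟩ := T.exists_max_image signedColex hT hne
  refine ⟨p, hp, fun q hq => ?_⟩
  rcases (hmax q hq).eq_or_lt with h | h
  · exact Or.inl (signedColex_injective h)
  · exact Or.inr (finLt_iff_signedColex_lt.mpr h)

theorem Prof.Lt.trans {a b c : Prof d} (hab : a.Lt b) (hbc : b.Lt c) : a.Lt c := by
  cases a <;> cases b <;> cases c <;> simp_all only [Prof.Lt]
  exact hab.trans hbc

theorem Prof.Le.trans {a b c : Prof d} (hab : a.Le b) (hbc : b.Le c) : a.Le c := by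
  rcases hab with rfl | hab
  · exact hbc
  · rcases hbc with rfl | hbc
    exacts [Or.inr hab, Or.inr (hab.trans hbc)]

theorem isMaxOf_top {S : Set (Prof d)} (h : Prof.top ∈ S) : IsMaxOf S .top := by
  refine ⟨h, fun q _ => ?_⟩
  cases q
  exacts [Or.inr trivial, Or.inr trivial, Or.inl rfl]

theorem exists_isMaxOf_of_subset_image_fin {S : Set (Prof d)} {T : Set (Fin d → ℤ)}
    (hST : S ⊆ Prof.fin '' T) (hT : T.Finite) (hne : S.Nonempty) : ∃ p, IsMaxOf S p := by
  have hfin : (Prof.fin ⁻¹' S).Finite :=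
    hT.subset fun p hp => by simpa using hST hp
  obtain ⟨q, hq⟩ := hne
  obtain ⟨q, -, rfl⟩ := hST hq
  obtain ⟨p, hp, hmax⟩ := hfin.exists_finLe_max ⟨q, hq⟩
  refine ⟨.fin p, hp, fun r hr => ?_⟩
  obtain ⟨r, -, rfl⟩ := hST hr
  exact (hmax r hr).imp (congrArg Prof.fin) id

section Plays

variable {A : PGA V d} {σ σ' : V → Option V → Prop} {τ : V → V → Prop}
  {s : V} {π : ℕ → Option V}

def playValues (A : PGA V d) (σ : V → Option V → Prop) (τ : V → V → Prop) (s : V) :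
    Set (Prof d) :=
  { q | ∃ π, IsPlay A σ τ s π ∧ q = PlayValue A π }

theorem IsPlay.mono (hσ : ∀ u t, σ u t → σ' u t) (hp : IsPlay A σ τ s π) :
    IsPlay A σ' τ s π := by
  refine ⟨hp.1, fun n => ?_⟩
  have hstep := hp.2 n
  revert hstep
  cases π n with
  | none => exact id
  | some u => exact Or.imp (And.imp_right (hσ u _)) id

theorem playValues_mono (hσ : ∀ u t, σ u t → σ' u t) :
    playValues A σ τ s ⊆ playValues A σ' τ s :=
  fun _ ⟨π, hp, hq⟩ => ⟨π, hp.mono hσ, hq⟩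

theorem exists_isPlay (hσ : Strategy0 A σ) (hτ : Strategy1 A τ) (s : V) :
    ∃ π, IsPlay A σ τ s π := by
  have hnext : ∀ x, ∃ y, PlayStep A σ τ x y := by
    rintro (_ | u)
    · exact ⟨none, rfl⟩
    · rcases (by omega : A.owner u = 0 ∨ A.owner u = 1) with h0 | h1
      · obtain ⟨t, ht⟩ := hσ.2 u h0
        exact ⟨t, Or.inl ⟨h0, ht⟩⟩
      · obtain ⟨t, ht⟩ := hτ.2 u h1
        exact ⟨some t, Or.inr ⟨h1, t, rfl, ht⟩⟩
  choose next hnext using hnext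
  refine ⟨fun n => next^[n] (some s), rfl, fun n => ?_⟩
  show PlayStep A σ τ (next^[n] (some s)) (next^[n + 1] (some s))
  rw [Function.iterate_succ_apply']
  exact hnext _

theorem IsPlay.eq_none_of_le (hp : IsPlay A σ τ s π) {m n : ℕ} (hm : π m = none)
    (hmn : m ≤ n) : π n = none := by
  induction n, hmn using Nat.le_induction with
  | base => exact hm
  | succ n _ ih =>
    have hstep := hp.2 n
    rw [ih] at hstep
    exact hstep

def loopIndex (i j : ℕ) : ℕ → ℕ
  | 0 => 0
  | n + 1 => if loopIndex i j n + 1 = j then i else loopIndex i j n + 1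

theorem loopIndex_lt {i j : ℕ} (hij : i < j) (n : ℕ) : loopIndex i j n < j := by
  induction n with
  | zero => exact Nat.zero_lt_of_lt hij
  | succ n ih =>
    rw [loopIndex]
    split_ifs with h
    · exact hij
    · omega

theorem IsPlay.loop (hp : IsPlay A σ τ s π) {i j : ℕ} (hπ : π i = π j) :
    IsPlay A σ τ s (π ∘ loopIndex i j) := by
  refine ⟨hp.1, fun n => ?_⟩
  have hnext : π (loopIndex i j (n + 1)) = π (loopIndex i j n + 1) := by
    rw [loopIndex]
    split_ifs with h
    · rw [hπ, h]
    · rfl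
  simp only [Function.comp_apply, hnext]
  exact hp.2 _

theorem IsPlay.eq_none_of_card [Fintype V] (hp : IsPlay A σ τ s π)
    (hno_inf : ¬∃ π', IsPlay A σ τ s π' ∧ ∀ n, π' n ≠ none) : π (Fintype.card V) = none := by
  by_contra hlast
  have halive : ∀ n : Fin (Fintype.card V + 1), ∃ v, π n = some v := fun n =>
    Option.ne_none_iff_exists'.mp fun h => hlast (hp.eq_none_of_le h (Nat.lt_succ_iff.mp n.2))
  choose g hg using halive
  obtain ⟨m, n, hmn, hgmn⟩ := Fintype.exists_ne_map_eq_of_card_lt g (by simp)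
  have hπ : π m = π n := by rw [hg m, hg n, hgmn]
  wlog hlt : (m : ℕ) < n generalizing m n
  · exact this n m hmn.symm hgmn.symm hπ.symm (by omega)
  refine hno_inf ⟨_, hp.loop hπ, fun k hk => ?_⟩
  exact Option.some_ne_none _ ((hg n).symm.trans (hp.eq_none_of_le hk (loopIndex_lt hlt k).le))

end Plays

theorem Finite.eventually_atTop_frequently_eq {α : Type*} [Finite α] (f : ℕ → α) :
    ∀ᶠ n in atTop, ∃ᶠ m in atTop, f m = f n := by
  have hv : ∀ v, ∀ᶠ n in atTop, f n = v → ∃ᶠ m in atTop, f m = v := by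
    intro v
    by_cases hrec : ∃ᶠ m in atTop, f m = v
    · exact Eventually.of_forall fun _ _ => hrec
    · exact (Filter.not_frequently.mp hrec).mono fun n hn hfn => absurd hfn hn
  exact (Filter.eventually_all.mpr hv).mono fun n hn => hn (f n) rfl

section InfinitePlays

variable {A : PGA V d} {σ : V → Option V → Prop} {f : ℕ → V}

theorem cycleIn_of_eq (hf : ∀ n, EdgeSig A σ (f n) (f (n + 1))) {i j : ℕ} (hij : i < j)
    (heq : f i = f j) : CycleIn A σ ((List.range (j - i)).map fun k => f (i + k)) := by
  obtain ⟨m, hm⟩ : ∃ m, j - i = m + 1 := ⟨j - i - 1, by omega⟩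
  refine ⟨by simp [hm], ?_, fun a b ha hb => ?_⟩
  · show List.IsChain _ _
    rw [hm, List.isChain_map, List.isChain_range_succ]
    exact fun k _ => hf (i + k)
  · obtain rfl : a = f i := by simpa [hm, List.head?_range] using ha.symm
    obtain rfl : b = f (i + m) := by simpa [hm, List.getLast?_range] using hb.symm
    rw [heq, show j = i + m + 1 by omega]
    exact hf (i + m)

theorem colorAt_comp_some {n : ℕ} {k : Fin d} :
    ColorAt A (some ∘ f) n k ↔ A.color (f n) = k :=
  ⟨fun ⟨_, hv, hc⟩ => Option.some_injective _ hv ▸ hc, fun h => ⟨_, rfl, h⟩⟩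

theorem Reasonable.won0B [Finite V] (hr : Reasonable A σ)
    (hf : ∀ n, EdgeSig A σ (f n) (f (n + 1))) : Won0B A (some ∘ f) := by
  obtain ⟨M, hM⟩ := Filter.eventually_atTop.mp (Finite.eventually_atTop_frequently_eq f)
  obtain ⟨v, hv, hvmax⟩ := Set.exists_max_image {v | ∃ᶠ m in atTop, f m = v} A.color
    (Set.toFinite _) ⟨f M, hM M le_rfl⟩
  replace hv : ∀ N, ∃ n ≥ N, f n = v := Filter.frequently_atTop.mp hv
  obtain ⟨i, hiM, hi⟩ := hv M
  obtain ⟨j, hij, hj⟩ := hv (i + 1)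
  refine ⟨A.color v, hr _ (cycleIn_of_eq hf hij (hi.trans hj.symm)) v ?_ ?_, fun N => ?_,
    fun c hc => ⟨M, fun n hn => ?_⟩⟩
  · exact List.mem_map.mpr ⟨0, List.mem_range.mpr (by omega), hi⟩
  · intro w hw
    obtain ⟨k, -, rfl⟩ := List.mem_map.mp hw
    exact hvmax _ (hM _ (by omega))
  · obtain ⟨n, hn, hfn⟩ := hv N
    exact ⟨n, hn, colorAt_comp_some.mpr (congrArg A.color hfn)⟩
  · rw [colorAt_comp_some]
    exact ((hvmax _ (hM n hn)).trans_lt hc).ne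

theorem playValue_eq_top [Finite V] {τ : V → V → Prop} {s : V} {π : ℕ → Option V}
    (hτ : Strategy1 A τ) (hr : Reasonable A σ) (hp : IsPlay A σ τ s π)
    (hinf : ∀ n, π n ≠ none) : PlayValue A π = .top := by
  choose f hf using fun n => Option.ne_none_iff_exists'.mp (hinf n)
  obtain rfl : π = some ∘ f := funext hf
  have hedge : ∀ n, EdgeSig A σ (f n) (f (n + 1)) := fun n => by
    rcases hp.2 n with ⟨-, hσ⟩ | ⟨h1, v, hv, hτv⟩
    · exact Or.inr hσ
    · obtain rfl := Option.some_injective _ hv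
      exact Or.inl ⟨h1, (hτ.1 _ _ hτv).2⟩
  rw [PlayValue, dif_neg (by simp), if_pos (hr.won0B hedge)]

end InfinitePlays

section Valuations

variable {A : PGA V d} {σ : V → Option V → Prop} {τ : V → V → Prop}

theorem playValue_mem_image_fin_Icc {π : ℕ → Option V} {n : ℕ} (hn : π n = none) :
    PlayValue A π ∈ Prof.fin '' Set.Icc 0 (fun _ => (n : ℤ)) := by
  have hend : ∃ n, π n = none := ⟨n, hn⟩
  rw [PlayValue, dif_pos hend]
  refine ⟨_, ⟨fun k => by positivity, fun k => ?_⟩, rfl⟩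
  show ((_ : ℕ) : ℤ) ≤ n
  exact_mod_cast ((Finset.card_filter_le _ _).trans_eq (Finset.card_range _)).trans
    (Nat.find_min' hend hn)

theorem exists_isMaxOf_playValues [Fintype V] (hσ : Strategy0 A σ) (hr : Reasonable A σ)
    (hτ : Strategy1 A τ) (s : V) : ∃ p, IsMaxOf (playValues A σ τ s) p := by
  by_cases hinf : ∃ π, IsPlay A σ τ s π ∧ ∀ n, π n ≠ none
  · obtain ⟨π, hp, hπ⟩ := hinf
    exact ⟨.top, isMaxOf_top ⟨π, hp, (playValue_eq_top hτ hr hp hπ).symm⟩⟩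
  · have hbound :
        playValues A σ τ s ⊆ Prof.fin '' Set.Icc 0 (fun _ => (Fintype.card V : ℤ)) := by
      rintro _ ⟨π, hp, rfl⟩
      exact playValue_mem_image_fin_Icc (hp.eq_none_of_card hinf)
    obtain ⟨π, hp⟩ := exists_isPlay hσ hτ s
    exact exists_isMaxOf_of_subset_image_fin hbound (Set.finite_Icc _ _) ⟨_, π, hp, rfl⟩

end Valuations

theorem valuation_monotone_in_strategy_general {V : Type} {d : ℕ} [Fintype V] (A : PGA V d)
    (σa σb : V → Option V → Prop) (Va Vb : Option V → Prof d)
    (ha : Strategy0 A σa)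
    (hra : Reasonable A σa)
    (hsub : ∀ s t, σa s t → σb s t)
    (hVa : IsValuation A σa Va) (hVb : IsValuation A σb Vb) :
    ∀ x : Option V, Prof.Le (Va x) (Vb x) := by
  rintro (_ | s)
  · exact Or.inl (hVa.1.trans hVb.1.symm)
  · obtain ⟨⟨τ, hτ, hVbτ⟩, -⟩ := hVb.2 s
    obtain ⟨p, hp⟩ := exists_isMaxOf_playValues ha hra hτ s
    have hVap : Prof.Le (Va (some s)) p := (hVa.2 s).2 p ⟨τ, hτ, hp⟩
    have hpVb : Prof.Le p (Vb (some s)) := hVbτ.2 p (playValues_mono hsub hp.1)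
    exact hVap.trans hpVb

/-- **Lemma 4.** Valuations are monotone under inclusion of strategies:
if `σ_a ⊆ σ_b` are both reasonable player-0 strategies, then `𝒱_{σ_a}(s) ≼ 𝒱_{σ_b}(s)`
for all nodes `s`. -/
theorem valuation_monotone_in_strategy {V : Type} {d : ℕ} [Fintype V] (A : PGA V d)
    (σa σb : V → Option V → Prop) (Va Vb : Option V → Prof d)
    (ha : Strategy0 A σa) (hb : Strategy0 A σb)
    (hra : Reasonable A σa) (hrb : Reasonable A σb)
    (hsub : ∀ s t, σa s t → σb s t)
    (hVa : IsValuation A σa Va) (hVb : IsValuation A σb Vb) :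
    ∀ x : Option V, Prof.Le (Va x) (Vb x) :=
  valuation_monotone_in_strategy_general A σa σb Va Vb ha hra hsub hVa hVb
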